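/- arXiv:1310.3674 — 3 statements merged into one kernel-verified Lean document; each statement's English description precedes it below -/
import Mathlib

section
/- For every n ≥ 2, the (n+1)-ary Boolean relation R = { (x₁,…,xₙ,c₀) ∈ Bool^{n+1} | ¬(x₁ ∧ ⋯ ∧ xₙ) ∧ (c₀ = 0) } is a weak base of the co-clone it generates (this co-clone is IS^n_{1} in Post's lattice): for every finite set Δ of Boolean relations with Pol(Δ) = Pol({R}) one has pPol(Δ) ⊆ pPol({R}). -/
/-- A Boolean relation of arity `k`: a set of `k`-tuples over `Bool`. -/
abbrev BRel (k : ℕ) := Set (Fin k → Bool)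

/-- A total `m`-ary Boolean operation `f` preserves a `k`-ary relation `R`. -/
def Preserves {m k : ℕ} (f : (Fin m → Bool) → Bool) (R : BRel k) : Prop :=
  ∀ ts : Fin m → Fin k → Bool, (∀ j, ts j ∈ R) → (fun i => f (fun j => ts j i)) ∈ R

/-- A partial `m`-ary Boolean operation (modelled with `Option Bool`; `none` =
undefined) preserves a `k`-ary relation `R`. -/
def PPreserves {m k : ℕ} (f : (Fin m → Bool) → Option Bool) (R : BRel k) : Prop :=
  ∀ ts : Fin m → Fin k → Bool, (∀ j, ts j ∈ R) →
    ∀ u : Fin k → Bool, (∀ i, f (fun j => ts j i) = some (u i)) → u ∈ R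

/-- The set of all (finitary, total) polymorphisms of a set of relations. -/
def Pol (Γ : Set (Σ k, BRel k)) : Set (Σ m, (Fin m → Bool) → Bool) :=
  { f | ∀ R ∈ Γ, Preserves f.2 R.2 }

/-- The set of all partial polymorphisms of a set of relations. -/
def pPol (Γ : Set (Σ k, BRel k)) : Set (Σ m, (Fin m → Bool) → Option Bool) :=
  { f | ∀ R ∈ Γ, PPreserves f.2 R.2 }

/-- `R` is a weak base of the co-clone it generates: every finite `Δ` with the
same polymorphisms as `R` satisfies `pPol Δ ⊆ pPol {R}`. -/
def IsWeakBase {k : ℕ} (R : BRel k) : Prop :=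
  ∀ Δ : Set (Σ k, BRel k), Δ.Finite →
    Pol Δ = Pol {⟨k, R⟩} → pPol Δ ⊆ pPol {⟨k, R⟩}

/-!
Let `cᵢ ∈ Bool^n` be the `i`-th column of the matrix whose rows are the tuples of `R` that are
`1` everywhere except at one coordinate `k < n` and at `c₀`; for `n ≥ 2` these columns are
distinct. Send `a ∈ Bool^n` to the coordinate `ρ a` whose column it is, and to `c₀` if there is
none. Then a tuple `t` lies in `R` exactly when the total operation `t ∘ ρ` preserves `R`.
Given `f ∈ pPol Δ` and `t₁, …, t_m ∈ R` with `f(t₁, …, t_m) = u`, the operation `u ∘ ρ` is the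
total composition of `f` with the polymorphisms `tⱼ ∘ ρ ∈ Pol R = Pol Δ`, so it preserves `Δ`;
hence `u ∘ ρ ∈ Pol R` and `u ∈ R`.
-/

open Function

theorem mem_pol_singleton_iff {m k : ℕ} {f : (Fin m → Bool) → Bool} {R : BRel k} :
    (⟨m, f⟩ : Σ m, (Fin m → Bool) → Bool) ∈ Pol {⟨k, R⟩} ↔ Preserves f R := by
  simp [Pol]

theorem PPreserves.preserves_of_comp {m k N : ℕ} {R : BRel k}
    {f : (Fin m → Bool) → Option Bool} (hf : PPreserves f R)
    {g : Fin m → (Fin N → Bool) → Bool} (hg : ∀ j, Preserves (g j) R)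
    {h : (Fin N → Bool) → Bool} (hfg : ∀ a, f (fun j => g j a) = some (h a)) :
    Preserves h R :=
  fun qs hqs => hf (fun j i => g j (fun l => qs l i)) (fun j => hg j qs hqs) _ fun _ => hfg _

theorem isWeakBase_of_preserves_comp_iff {k N : ℕ} {R : BRel k} (ρ : (Fin N → Bool) → Fin k)
    (hρ : ∀ t, Preserves (t ∘ ρ) R ↔ t ∈ R) : IsWeakBase R := by
  rintro Δ - hPol ⟨m, f⟩ hf _ rfl ts hts u hu
  have hts_pol : ∀ j, (⟨N, ts j ∘ ρ⟩ : Σ m, (Fin m → Bool) → Bool) ∈ Pol Δ := fun j => by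
    rw [hPol, mem_pol_singleton_iff]
    exact (hρ (ts j)).2 (hts j)
  have hu_pol : (⟨N, u ∘ ρ⟩ : Σ m, (Fin m → Bool) → Bool) ∈ Pol Δ := fun S hS =>
    PPreserves.preserves_of_comp (hf S hS) (fun j => hts_pol j S hS) fun a => hu (ρ a)
  rw [hPol, mem_pol_singleton_iff] at hu_pol
  exact (hρ u).1 hu_pol

namespace NandZero

variable {n : ℕ}

def rel (n : ℕ) : BRel (n + 1) :=
  { t | ¬ (∀ i : Fin n, t i.castSucc = true) ∧ t (Fin.last n) = false }

def row (k : Fin n) : Fin (n + 1) → Bool :=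
  fun j => decide (j ≠ k.castSucc ∧ j ≠ Fin.last n)

def column (i : Fin (n + 1)) : Fin n → Bool :=
  fun k => row k i

noncomputable def coordOf : (Fin n → Bool) → Fin (n + 1) :=
  extend column id fun _ => Fin.last n

theorem row_mem (k : Fin n) : row k ∈ rel n :=
  ⟨fun h => by simpa [row] using h k, by simp [row]⟩

theorem column_last : column (Fin.last n) = fun _ => false := by
  ext k
  simp [column, row]

theorem column_castSucc (i k : Fin n) : column i.castSucc k = decide (i ≠ k) := by
  simp [column, row, Fin.castSucc_ne_last]

theorem column_injective (hn : 2 ≤ n) : Injective (column (n := n)) := by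
  have hne : ∀ i : Fin n, column i.castSucc ≠ column (Fin.last n) := fun i h => by
    obtain ⟨k, hk⟩ : ∃ k : Fin n, k ≠ i :=
      @exists_ne _ (Fin.nontrivial_iff_two_le.2 hn) i
    simpa [column_last, column_castSucc, hk.symm] using congrFun h k
  intro i j h
  induction i using Fin.lastCases with
  | last =>
    induction j using Fin.lastCases with
    | last => rfl
    | cast j => exact absurd h.symm (hne j)
  | cast i =>
    induction j using Fin.lastCases with
    | last => exact absurd h (hne i)
    | cast j =>
      have hji : j = i := by simpa [column_castSucc] using congrFun h i
      rw [hji]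

theorem coordOf_column (hn : 2 ≤ n) (i : Fin (n + 1)) : coordOf (column i) = i :=
  (column_injective hn).extend_apply _ _ _

theorem column_coordOf (hn : 2 ≤ n) {a : Fin n → Bool} (ha : coordOf a ≠ Fin.last n) :
    column (coordOf a) = a := by
  by_cases h : ∃ i, column i = a
  · obtain ⟨i, rfl⟩ := h
    rw [coordOf_column hn]
  · exact absurd (extend_apply' _ _ _ h) ha

theorem preserves_comp_coordOf_iff (hn : 2 ≤ n) (t : Fin (n + 1) → Bool) :
    Preserves (t ∘ coordOf) (rel n) ↔ t ∈ rel n := by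
  constructor
  · intro ht
    have h_rows : (fun i => t (coordOf fun k => row k i)) = t :=
      funext fun i => congrArg t (coordOf_column hn i)
    exact h_rows ▸ ht row row_mem
  · rintro ⟨ht, ht_last⟩ qs hqs
    obtain ⟨k, htk⟩ : ∃ k : Fin n, t k.castSucc = false := by simpa using ht
    refine ⟨fun hall => (hqs k).1 fun i => ?_, ?_⟩
    · have hi : t (coordOf fun l => qs l i.castSucc) = true := hall i
      have h_last : coordOf (fun l => qs l i.castSucc) ≠ Fin.last n := by
        rintro h; simp [h, ht_last] at hi
      have h_k : coordOf (fun l => qs l i.castSucc) ≠ k.castSucc := by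
        rintro h; simp [h, htk] at hi
      -- `qs k i.castSucc = row k (coordOf _) = true`, as `row k` vanishes only at `k` and `last`
      have := congrFun (column_coordOf hn h_last) k
      simpa [column, row, h_k, h_last] using this.symm
    · have : (fun l => qs l (Fin.last n)) = column (Fin.last n) := by
        rw [column_last]; ext l; exact (hqs l).2
      simp [this, coordOf_column hn, ht_last]

end NandZero

theorem stmt7 (n : ℕ) (hn : 2 ≤ n) :
    IsWeakBase { t : Fin (n + 1) → Bool |
      ¬ (∀ i : Fin n, t (Fin.castLE (by omega) i) = true) ∧
      t ⟨n, by omega⟩ = false } :=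
  isWeakBase_of_preserves_comp_iff _ (NandZero.preserves_comp_coordOf_iff hn)
end

section
/- The 6-ary Boolean relation R = { (x₁,x₂,x₃,x₄,c₀,c₁) ∈ Bool⁶ | (x₁ ∨ x₂) ∧ (x₃ = ¬x₁) ∧ (x₄ = ¬x₂) ∧ (c₀ = 0) ∧ (c₁ = 1) } = { (0,1,1,0,0,1), (1,0,0,1,0,1), (1,1,0,0,0,1) } is a weak base of the co-clone it generates (this co-clone is ID₂ in Post's lattice): for every finite set Δ of Boolean relations with Pol(Δ) = Pol({R}) one has pPol(Δ) ⊆ pPol({R}). -/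
/-!
Let `Pol Δ = Pol {R}` and let `f` be a partial polymorphism of `Δ` applied to rows of `R`.
The columns are `a, b, ¬a, ¬b, 0, 1` with `a ∨ b` holding rowwise, and `f` is defined on each of
them. Composing `f` with projections and the majority operation (which preserves every binary
relation, hence `R`) so that only these six columns are ever fed to `f` produces *total*
operations in `Pol Δ = Pol {R}`. Evaluating such a unary, binary and ternary operation on
suitable rows of `R` shows that the result of `f` satisfies each conjunct defining `R`.
-/

theorem mem_Pol_singleton_iff {k m : ℕ} {R : BRel k} {g : (Fin m → Bool) → Bool} :
    (⟨m, g⟩ : Σ m, (Fin m → Bool) → Bool) ∈ Pol {⟨k, R⟩} ↔ Preserves g R := by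
  simp [Pol]

theorem preserves_proj {k n : ℕ} (R : BRel k) (l : Fin n) : Preserves (fun y => y l) R :=
  fun _ hts => hts l

-- By `hdom`, the fallback value of `getD` is never used.
theorem getD_comp_mem_Pol {Δ : Set (Σ k, BRel k)} {m n : ℕ}
    {f : (Fin m → Bool) → Option Bool} (hf : ⟨m, f⟩ ∈ pPol Δ)
    {φ : Fin m → (Fin n → Bool) → Bool} (hφ : ∀ j, ⟨n, φ j⟩ ∈ Pol Δ)
    (hdom : ∀ y, (f fun j => φ j y) ≠ none) :
    (⟨n, fun y => (f fun j => φ j y).getD false⟩ : Σ n, (Fin n → Bool) → Bool) ∈ Pol Δ :=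
  fun S hS ρ hρ => hf S hS (fun j i => φ j fun l => ρ l i) (fun j => hφ j S hS ρ hρ) _
    fun _ => (Option.getD_of_ne_none (hdom _) false).symm

theorem Preserves.getD_comp {Δ : Set (Σ k, BRel k)} {k m n : ℕ} {R : BRel k}
    (hPol : Pol Δ = Pol {⟨k, R⟩}) {f : (Fin m → Bool) → Option Bool} (hf : ⟨m, f⟩ ∈ pPol Δ)
    {φ : Fin m → (Fin n → Bool) → Bool} (hφ : ∀ j, Preserves (φ j) R)
    (hdom : ∀ y, (f fun j => φ j y) ≠ none) :
    Preserves (fun y => (f fun j => φ j y).getD false) R := by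
  rw [← mem_Pol_singleton_iff, ← hPol]
  exact getD_comp_mem_Pol hf (fun j => hPol ▸ mem_Pol_singleton_iff.2 (hφ j)) hdom

def maj3 (y : Fin 3 → Bool) : Bool := (y 0 && y 1) || (y 1 && y 2) || (y 0 && y 2)

theorem maj3_eq_or (y : Fin 3 → Bool) : maj3 y = y 0 ∨ maj3 y = y 2 := by
  revert y; decide

-- Two of the three coordinates agree with the majority in `x`, two in `y`: they share one.
theorem exists_maj3_eq_and_maj3_eq (x y : Fin 3 → Bool) :
    ∃ j, maj3 x = x j ∧ maj3 y = y j := by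
  revert x y; decide

theorem maj3_preserves_binary (B : Bool → Bool → Prop) {x y : Fin 3 → Bool}
    (h : ∀ j, B (x j) (y j)) : B (maj3 x) (maj3 y) := by
  obtain ⟨j, hx, hy⟩ := exists_maj3_eq_and_maj3_eq x y
  exact hx ▸ hy ▸ h j

theorem cond_comp_ne_none {m : ℕ} {f : (Fin m → Bool) → Option Bool} {x : Fin m → Bool}
    (h₀ : f (fun _ => false) ≠ none) (h₁ : f (fun _ => true) ≠ none) (hx : f x ≠ none)
    (hnx : f (fun j => !x j) ≠ none) (p q : Bool) : f (fun j => cond (x j) p q) ≠ none := by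
  cases p <;> cases q <;> simpa

theorem cond_cond_maj3_eq_ite {ι : Type*} {a b : ι → Bool} (hab : ∀ j, a j = true ∨ b j = true)
    (y : Fin 3 → Bool) :
    (fun j => cond (a j) (cond (b j) (maj3 y) (y 0)) (y 2)) =
      if maj3 y = y 0 then fun j => cond (a j) (y 0) (y 2)
      else fun j => cond (b j) (y 2) (y 0) := by
  split_ifs with h
  · simp [h]
  · funext j
    rw [(maj3_eq_or y).resolve_left h]
    rcases hab j with h | h <;> simp [h]

namespace RelID2

def R : BRel 6 := { t : Fin 6 → Bool |
      (t 0 = true ∨ t 1 = true) ∧ t 2 = ! t 0 ∧ t 3 = ! t 1 ∧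
      t 4 = false ∧ t 5 = true }

theorem preserves_maj3 : Preserves maj3 R := fun _ hts =>
  ⟨maj3_preserves_binary (fun p q => p = true ∨ q = true) fun j => (hts j).1,
    maj3_preserves_binary (fun p q => q = !p) fun j => (hts j).2.1,
    maj3_preserves_binary (fun p q => q = !p) fun j => (hts j).2.2.1,
    maj3_preserves_binary (fun p q => p = false ∧ q = true) fun j => (hts j).2.2.2⟩

def t₁ : Fin 6 → Bool := ![false, true, true, false, false, true]
def t₂ : Fin 6 → Bool := ![true, false, false, true, false, true]
def t₃ : Fin 6 → Bool := ![true, true, false, false, false, true]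

theorem t₁_mem : t₁ ∈ R := ⟨Or.inr rfl, rfl, rfl, rfl, rfl⟩
theorem t₂_mem : t₂ ∈ R := ⟨Or.inl rfl, rfl, rfl, rfl, rfl⟩
theorem t₃_mem : t₃ ∈ R := ⟨Or.inl rfl, rfl, rfl, rfl, rfl⟩

theorem map_const_of_preserves {n : ℕ} {g : (Fin n → Bool) → Bool} (hg : Preserves g R) :
    g (fun _ => false) = false ∧ g (fun _ => true) = true :=
  have h := hg (fun _ => t₁) fun _ => t₁_mem
  ⟨h.2.2.2.1, h.2.2.2.2⟩

theorem map_not_of_preserves {g : (Fin 2 → Bool) → Bool} (hg : Preserves g R) :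
    g ![true, false] = !g ![false, true] := by
  have h := (hg ![t₁, t₂] (Fin.forall_fin_two.2 ⟨t₁_mem, t₂_mem⟩)).2.1
  beta_reduce at h
  rwa [show (fun j => ![t₁, t₂] j 2) = ![true, false] by decide,
    show (fun j => ![t₁, t₂] j 0) = ![false, true] by decide] at h

theorem map_or_of_preserves {g : (Fin 3 → Bool) → Bool} (hg : Preserves g R) :
    g ![false, true, true] = true ∨ g ![true, true, false] = true := by
  have h := (hg ![t₁, t₃, t₂]
    (Fin.forall_fin_succ.2 ⟨t₁_mem, Fin.forall_fin_two.2 ⟨t₃_mem, t₂_mem⟩⟩)).1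
  beta_reduce at h
  rwa [show (fun j => ![t₁, t₃, t₂] j 0) = ![false, true, true] by decide,
    show (fun j => ![t₁, t₃, t₂] j 1) = ![true, true, false] by decide] at h

section PartialPolymorphism

variable {Δ : Set (Σ k, BRel k)} (hPol : Pol Δ = Pol {⟨6, R⟩}) {m : ℕ}
  {f : (Fin m → Bool) → Option Bool} (hf : ⟨m, f⟩ ∈ pPol Δ)
include hPol hf

theorem map_const_of_pPol {c₀ c₁ : Bool} (h₀ : f (fun _ => false) = some c₀)
    (h₁ : f (fun _ => true) = some c₁) : c₀ = false ∧ c₁ = true := by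
  have hg := Preserves.getD_comp hPol hf (φ := fun _ (y : Fin 1 → Bool) => y 0)
    (fun _ => preserves_proj R 0) fun y => by cases y 0 <;> simp [h₀, h₁]
  simpa [h₀, h₁] using map_const_of_preserves hg

theorem map_not_of_pPol (h₀ : f (fun _ => false) ≠ none) (h₁ : f (fun _ => true) ≠ none)
    {x : Fin m → Bool} {p q : Bool} (hx : f x = some p) (hnx : f (fun j => !x j) = some q) :
    q = !p := by
  have hg := Preserves.getD_comp hPol hf (φ := fun j (y : Fin 2 → Bool) => cond (x j) (y 0) (y 1))
    (fun j => by cases x j <;> exact preserves_proj R _)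
    fun _ => cond_comp_ne_none h₀ h₁ (by simp [hx]) (by simp [hnx]) _ _
  have h := map_not_of_preserves hg
  simp only [Matrix.cons_val_zero, Matrix.cons_val_one, Matrix.cons_val_fin_one,
    Bool.cond_false_right, Bool.cond_true_right, Bool.and_true, Bool.or_false, hx, hnx,
    Option.getD_some] at h
  simp [h]

theorem map_or_of_pPol {a b : Fin m → Bool} (hab : ∀ j, a j = true ∨ b j = true)
    (h₀ : f (fun _ => false) ≠ none) (h₁ : f (fun _ => true) ≠ none)
    (hna : f (fun j => !a j) ≠ none) (hnb : f (fun j => !b j) ≠ none) {p q : Bool}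
    (ha : f a = some p) (hb : f b = some q) : p = true ∨ q = true := by
  have hg := Preserves.getD_comp hPol hf
    (φ := fun j y => cond (a j) (cond (b j) (maj3 y) (y 0)) (y 2))
    (fun j => by cases a j <;> cases b j <;> first | exact preserves_maj3 | exact preserves_proj R _)
    fun y => by
      rw [cond_cond_maj3_eq_ite hab]
      split_ifs
      · exact cond_comp_ne_none h₀ h₁ (by simp [ha]) hna _ _
      · exact cond_comp_ne_none h₀ h₁ (by simp [hb]) hnb _ _
  have h := map_or_of_preserves hg
  simp only [cond_cond_maj3_eq_ite hab] at h
  simpa [maj3, ha, hb] using h.symm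

end PartialPolymorphism

end RelID2

theorem stmt15 :
    IsWeakBase { t : Fin 6 → Bool |
      (t 0 = true ∨ t 1 = true) ∧ t 2 = ! t 0 ∧ t 3 = ! t 1 ∧
      t 4 = false ∧ t 5 = true } := by
  rintro Δ - hPol ⟨m, f⟩ hf _ rfl ts hts u hu
  have ha : f (fun j => ts j 0) = some (u 0) := hu 0
  have hb : f (fun j => ts j 1) = some (u 1) := hu 1
  have hna : f (fun j => !ts j 0) = some (u 2) := by simpa only [fun j => (hts j).2.1] using hu 2
  have hnb : f (fun j => !ts j 1) = some (u 3) := by simpa only [fun j => (hts j).2.2.1] using hu 3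
  have h₀ : f (fun _ => false) = some (u 4) := by simpa only [fun j => (hts j).2.2.2.1] using hu 4
  have h₁ : f (fun _ => true) = some (u 5) := by simpa only [fun j => (hts j).2.2.2.2] using hu 5
  have ne_none {x : Fin m → Bool} {v : Bool} (h : f x = some v) : f x ≠ none := by simp [h]
  exact ⟨RelID2.map_or_of_pPol hPol hf (fun j => (hts j).1) (ne_none h₀) (ne_none h₁)
      (ne_none hna) (ne_none hnb) ha hb,
    RelID2.map_not_of_pPol hPol hf (ne_none h₀) (ne_none h₁) ha hna,
    RelID2.map_not_of_pPol hPol hf (ne_none h₀) (ne_none h₁) hb hnb,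
    RelID2.map_const_of_pPol hPol hf h₀ h₁⟩
end

section
/- The 4-ary Boolean parity relation EVEN⁴ = { (x₁,x₂,x₃,x₄) ∈ Bool⁴ | x₁ ⊕ x₂ ⊕ x₃ ⊕ x₄ = 0 } (the tuples with an even number of coordinates equal to 1) is a weak base of the co-clone it generates (this co-clone is IL in Post's lattice): for every finite set Δ of Boolean relations with Pol(Δ) = Pol({EVEN⁴}) one has pPol(Δ) ⊆ pPol({EVEN⁴}). -/
/-!
If the columns of `n` tuples of `R` enumerate `Bool^n` exactly once, every tuple `t ∈ R` is
the table of an `n`-ary operation. When all these operations preserve `R`, precomposing a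
partial polymorphism of `Δ` with the operations read off from `t₁, …, tₘ ∈ R` yields a total
`n`-ary polymorphism of `Δ`, hence of `R`; applied to the `n` generic tuples it returns the
image tuple, which therefore lies in `R`. For `EVEN⁴` take `n = 2`: the binary operations
whose four values have even parity are the affine ones, and these preserve `EVEN⁴`.
-/

abbrev TotalOp := Σ m, (Fin m → Bool) → Bool

lemma mem_Pol_singleton {m k : ℕ} {g : (Fin m → Bool) → Bool} {R : BRel k} :
    (⟨m, g⟩ : TotalOp) ∈ Pol {⟨k, R⟩} ↔ Preserves g R := by
  simp [Pol]

lemma mem_pPol_singleton {k : ℕ} {f : Σ m, (Fin m → Bool) → Option Bool} {R : BRel k} :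
    f ∈ pPol {⟨k, R⟩} ↔ PPreserves f.2 R := by
  simp [pPol]

lemma PPreserves.preserves_comp {m n k : ℕ} {f : (Fin m → Bool) → Option Bool}
    {g : Fin m → (Fin n → Bool) → Bool} {h : (Fin n → Bool) → Bool} {R : BRel k}
    (hf : PPreserves f R) (hg : ∀ j, Preserves (g j) R)
    (hfg : ∀ v, f (fun j => g j v) = some (h v)) : Preserves h R :=
  fun ps hps => hf (fun j i => g j fun l => ps l i) (fun j => hg j ps hps) _ fun _ => hfg _

lemma mem_Pol_of_mem_pPol_comp {n : ℕ} {Γ : Set (Σ k, BRel k)}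
    {f : Σ m, (Fin m → Bool) → Option Bool} (hf : f ∈ pPol Γ)
    {g : Fin f.1 → (Fin n → Bool) → Bool} (hg : ∀ j, (⟨n, g j⟩ : TotalOp) ∈ Pol Γ)
    {h : (Fin n → Bool) → Bool} (hfg : ∀ v, f.2 (fun j => g j v) = some (h v)) :
    (⟨n, h⟩ : TotalOp) ∈ Pol Γ :=
  fun S hS => (hf S hS).preserves_comp (fun j => hg j S hS) hfg

theorem isWeakBase_of_columns_equiv {k n : ℕ} {R : BRel k} (e : Fin k ≃ (Fin n → Bool))
    (hgeneric : ∀ j, (fun i => e i j) ∈ R)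
    (htables : ∀ t ∈ R, Preserves (fun v => t (e.symm v)) R) : IsWeakBase R := by
  intro Δ _ hpol f hf
  rw [mem_pPol_singleton]
  intro ts hts u hu
  have hg : ∀ j, (⟨n, fun v => ts j (e.symm v)⟩ : TotalOp) ∈ Pol Δ :=
    fun j => hpol ▸ mem_Pol_singleton.2 (htables _ (hts j))
  have hh : (⟨n, fun v => u (e.symm v)⟩ : TotalOp) ∈ Pol Δ :=
    mem_Pol_of_mem_pPol_comp hf hg fun v => hu (e.symm v)
  convert mem_Pol_singleton.1 (hpol ▸ hh) (fun j i => e i j) hgeneric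
  exact (e.symm_apply_apply _).symm

def finFourEquivBoolPair : Fin 4 ≃ (Fin 2 → Bool) where
  toFun i := ![decide (2 ≤ i.val), decide (i.val % 2 = 1)]
  invFun v := cond (v 0) (cond (v 1) 3 2) (cond (v 1) 1 0)
  left_inv := by decide
  right_inv := by decide

theorem stmt16 :
    IsWeakBase { t : Fin 4 → Bool |
      Bool.xor (t 0) (Bool.xor (t 1) (Bool.xor (t 2) (t 3))) = false } := by
  refine isWeakBase_of_columns_equiv finFourEquivBoolPair (by decide) ?_
  simp only [Preserves, Set.mem_ofPred_eq]
  decide +kernel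
end
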